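/- Let n ∈ ℕ, γ > 0, L > 0, h : ℝⁿ → ℝ, and let f(z) = sup_{α ∈ ℝⁿ} ( h(α) − (γ/2) Σ_i z_i α_i² ). Let z* ∈ [0,1]ⁿ, let R = { i : 0 < z*_i < 1 } be the set of fractional coordinates, and suppose |R| ≥ 1. Assume: (i) f(z*) is finite and f(z*) ≤ f(z) for every z ∈ {0,1}ⁿ; (ii) for every z ∈ {0,1}ⁿ, f(z) is finite and attained at a maximizer α*(z) with ‖α*(z)‖_∞ ≤ L. Let z be a random vector in {0,1}ⁿ with independent coordinates z_i distributed Bernoulli(z*_i). Then for every ε > 0, with probability at least 1 − |R| · exp( − 2 ε² / (γ² L⁴ |R|²) ), the rounded vector z satisfies 0 ≤ f(z) − f(z*) ≤ ε. (Theorem 3.1 of the paper, ridge penalty case, with κ = γ² L⁴ |R|² / 2.) -/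

import Mathlib

/-! For a binary `z`, the maximizer `α*(z)` is a test point in the supremum defining `f z*`, so
`f z - f z* ≤ (γ/2) ∑ᵢ (z*ᵢ - zᵢ) α*(z)ᵢ²`. Almost surely the rounding keeps the integral
coordinates of `z*`, and if moreover every `i ∈ R` with `z*ᵢ > t` is rounded up, each summand is
at most `t L²`; for `t = 2ε/(γL²|R|)` the gap is then at most `ε`. Each of the at most `|R|`
failing coordinates is rounded down with probability `1 - z*ᵢ < 1 - t ≤ exp(-t²/2)`, and a union
bound finishes the proof. -/

open MeasureTheory Finset
open scoped NNReal ENNReal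

theorem Real.one_sub_le_exp_neg_sq_div_two {t : ℝ} (ht : 0 ≤ t) :
    1 - t ≤ Real.exp (-(t ^ 2 / 2)) := by
  nlinarith [Real.add_one_le_exp (-(t ^ 2 / 2)), Real.exp_pos (-(t ^ 2 / 2))]

theorem eq_zero_or_eq_one_of_mem_Icc_of_notMem_Ioo {x : ℝ} (hx : x ∈ Set.Icc 0 1)
    (hx' : x ∉ Set.Ioo 0 1) : x = 0 ∨ x = 1 := by
  rcases hx.1.eq_or_lt with h0 | hpos
  · exact Or.inl h0.symm
  · exact Or.inr (hx.2.eq_or_lt.resolve_right fun h1 => hx' ⟨hpos, h1⟩)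

theorem MeasureTheory.one_sub_le_measure_of_ae_notMem_imp {Ω : Type*} [MeasurableSpace Ω]
    {μ : Measure Ω} [IsProbabilityMeasure μ] {E B : Set Ω} {c : ℝ≥0∞} (hB : μ B ≤ c)
    (hE : ∀ᵐ ω ∂μ, ω ∉ B → ω ∈ E) : 1 - c ≤ μ E := by
  have hEc : μ Eᶜ ≤ c :=
    (measure_mono_ae (hE.mono fun ω h hω => by_contra fun hωB => hω (h hωB))).trans hB
  have hone : 1 ≤ μ E + μ Eᶜ := by
    simpa [Set.union_compl_self] using measure_union_le (μ := μ) E Eᶜ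
  rw [tsub_le_iff_right]
  exact hone.trans (add_le_add le_rfl hEc)

section BernoulliProduct

variable {ι : Type*} [Fintype ι]

noncomputable def bernoulliPi (p : ι → ℝ≥0) (hp : ∀ i, p i ≤ 1) : Measure (ι → Bool) :=
  Measure.pi fun i => (PMF.bernoulli (p i) (hp i)).toMeasure

variable (p : ι → ℝ≥0) (hp : ∀ i, p i ≤ 1)

instance : IsProbabilityMeasure (bernoulliPi p hp) := by
  unfold bernoulliPi; infer_instance

theorem bernoulliPi_eval_eq (i : ι) (b : Bool) :
    bernoulliPi p hp {ω | ω i = b} = cond b (p i) (1 - p i) := by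
  change bernoulliPi p hp (Function.eval i ⁻¹' {b}) = _
  rw [bernoulliPi, (measurePreserving_eval _ i).measure_preimage
    (measurableSet_singleton b).nullMeasurableSet, PMF.toMeasure_apply_singleton _ _
    (measurableSet_singleton b), PMF.bernoulli_apply]

theorem bernoulliPi_exists_eval_false_le (S : Finset ι) {c : ℝ} (hc : ∀ i ∈ S, 1 - (p i : ℝ) ≤ c) :
    bernoulliPi p hp {ω | ∃ i ∈ S, ω i = false} ≤ S.card * ENNReal.ofReal c :=
  calc bernoulliPi p hp {ω | ∃ i ∈ S, ω i = false}
      = bernoulliPi p hp (⋃ i ∈ S, {ω | ω i = false}) := by congr 1; ext; simp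
    _ ≤ ∑ i ∈ S, bernoulliPi p hp {ω | ω i = false} := measure_biUnion_finset_le _ _
    _ ≤ ∑ _i ∈ S, ENNReal.ofReal c := sum_le_sum fun i hi => by
        rw [bernoulliPi_eval_eq, cond_false, ← ENNReal.ofReal_coe_nnreal, NNReal.coe_sub (hp i),
          NNReal.coe_one]
        exact ENNReal.ofReal_le_ofReal (hc i hi)
    _ = S.card * ENNReal.ofReal c := by rw [sum_const, nsmul_eq_mul]

theorem bernoulliPi_ae_eval_eq :
    ∀ᵐ ω ∂bernoulliPi p hp, ∀ i, (p i = 0 ∨ p i = 1) →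
      (if ω i then (1 : ℝ) else 0) = (p i : ℝ) := by
  refine ae_all_iff.2 fun i => ?_
  by_cases hi : p i = 0 ∨ p i = 1
  · obtain ⟨b, hb⟩ : ∃ b, p i = cond b 1 0 := by
      rcases hi with h | h
      exacts [⟨false, h⟩, ⟨true, h⟩]
    have hnull : bernoulliPi p hp {ω | ω i = !b} = 0 := by
      cases b <;> simp [bernoulliPi_eval_eq, hb]
    filter_upwards [measure_eq_zero_iff_ae_notMem.mp hnull] with ω hω _
    cases b <;> simp_all
  · exact Filter.Eventually.of_forall fun _ h => absurd h hi

end BernoulliProduct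

theorem bernoulliPi_toNNReal_ae_eval_eq {ι : Type*} [Fintype ι] {zs : ι → ℝ}
    (hzs : ∀ i, 0 ≤ zs i ∧ zs i ≤ 1) :
    ∀ᵐ ω ∂bernoulliPi (fun i => (zs i).toNNReal) (fun i => Real.toNNReal_le_one.mpr (hzs i).2),
      ∀ i, ¬(0 < zs i ∧ zs i < 1) → (if ω i then (1 : ℝ) else 0) = zs i := by
  filter_upwards [bernoulliPi_ae_eval_eq _ _] with ω hω i hi
  rw [← Real.coe_toNNReal _ (hzs i).1]
  exact hω i (by rcases eq_zero_or_eq_one_of_mem_Icc_of_notMem_Ioo (hzs i) hi with h | h <;> simp [h])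

section RidgeRounding

variable {ι : Type*} [Fintype ι]

theorem ridge_sub_le_of_maximizer {h f : (ι → ℝ) → ℝ} {γ : ℝ} {z zs α : ι → ℝ}
    (hzs : h α - γ / 2 * ∑ i, zs i * α i ^ 2 ≤ f zs)
    (hz : f z = h α - γ / 2 * ∑ i, z i * α i ^ 2) :
    f z - f zs ≤ γ / 2 * ∑ i, (zs i - z i) * α i ^ 2 := by
  simp only [sub_mul, sum_sub_distrib, mul_sub]
  linarith

theorem sub_mul_sq_le_of_rounded {zs z a t L : ℝ} (hzs : 0 ≤ zs ∧ zs ≤ 1) (hz : z = 0 ∨ z = 1)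
    (hround : t < zs → z = 1) (ht : 0 ≤ t) (ha : |a| ≤ L) : (zs - z) * a ^ 2 ≤ t * L ^ 2 := by
  have ha2 : a ^ 2 ≤ L ^ 2 := sq_le_sq' (abs_le.1 ha).1 (abs_le.1 ha).2
  rcases hz with rfl | rfl
  · have hzst : zs ≤ t := le_of_not_gt fun h => zero_ne_one (hround h)
    rw [sub_zero]
    exact mul_le_mul hzst ha2 (sq_nonneg a) ht
  · nlinarith [sq_nonneg a, sq_nonneg L]

variable {zs z α : ι → ℝ} {R : Finset ι} {t L : ℝ}

theorem sum_sub_mul_sq_le_card_mul (hzs : ∀ i, 0 ≤ zs i ∧ zs i ≤ 1) (hz : ∀ i, z i = 0 ∨ z i = 1)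
    (hoff : ∀ i ∉ R, z i = zs i) (hround : ∀ i ∈ R, t < zs i → z i = 1) (ht : 0 ≤ t)
    (hα : ∀ i, |α i| ≤ L) :
    ∑ i, (zs i - z i) * α i ^ 2 ≤ R.card * (t * L ^ 2) := by
  rw [← sum_subset (subset_univ R) fun i _ hi => by rw [hoff i hi, sub_self, zero_mul]]
  simpa using sum_le_card_nsmul R _ _ fun i hi =>
    sub_mul_sq_le_of_rounded (hzs i) (hz i) (hround i hi) ht (hα i)

theorem ridge_sub_le_of_rounded {h f : (ι → ℝ) → ℝ} {γ : ℝ} (hγ : 0 ≤ γ)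
    (hzs : ∀ i, 0 ≤ zs i ∧ zs i ≤ 1) (hz : ∀ i, z i = 0 ∨ z i = 1)
    (hoff : ∀ i ∉ R, z i = zs i) (hround : ∀ i ∈ R, t < zs i → z i = 1) (ht : 0 ≤ t)
    (hα : ∀ i, |α i| ≤ L) (hzs_val : h α - γ / 2 * ∑ i, zs i * α i ^ 2 ≤ f zs)
    (hz_val : f z = h α - γ / 2 * ∑ i, z i * α i ^ 2) :
    f z - f zs ≤ γ / 2 * (R.card * (t * L ^ 2)) :=
  (ridge_sub_le_of_maximizer hzs_val hz_val).trans <| mul_le_mul_of_nonneg_left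
    (sum_sub_mul_sq_le_card_mul hzs hz hoff hround ht hα) (by positivity)

end RidgeRounding

theorem ridge_randomized_rounding_general (n : ℕ) (γ L : ℝ) (hγ : 0 < γ)
    (h : (Fin n → ℝ) → ℝ) (f : (Fin n → ℝ) → ℝ) (αstar : (Fin n → ℝ) → (Fin n → ℝ))
    (zstar : Fin n → ℝ) (hzstar : ∀ i, 0 ≤ zstar i ∧ zstar i ≤ 1)
    (R : Finset (Fin n)) (hR : R = Finset.univ.filter fun i => 0 < zstar i ∧ zstar i < 1)
    -- `f zstar` is the supremum value at `zstar` :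
    (hubstar : ∀ α : Fin n → ℝ, h α - (γ / 2) * ∑ i, zstar i * (α i) ^ 2 ≤ f zstar)
    -- `zstar` is a relaxation lower bound: `f zstar ≤ f z` for every binary `z` :
    (hmin : ∀ z : Fin n → ℝ, (∀ i, z i = 0 ∨ z i = 1) → f zstar ≤ f z)
    -- at every binary `z`, `f z` is the supremum value, attained at `αstar z` :
    (hatt : ∀ z : Fin n → ℝ, (∀ i, z i = 0 ∨ z i = 1) →
      f z = h (αstar z) - (γ / 2) * ∑ i, z i * (αstar z i) ^ 2)
    (hbdd : ∀ z : Fin n → ℝ, (∀ i, z i = 0 ∨ z i = 1) → ∀ i, |αstar z i| ≤ L)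
    -- `μ` is the product Bernoulli(zstar i) measure on `{0,1}ⁿ` :
    (μ : MeasureTheory.Measure (Fin n → Bool))
    (hμ : μ = MeasureTheory.Measure.pi fun i =>
      (PMF.bernoulli (Real.toNNReal (zstar i))
        (Real.toNNReal_le_one.mpr (hzstar i).2)).toMeasure)
    (ε : ℝ) (hε : 0 < ε) :
    ENNReal.ofReal
        (1 - R.card * Real.exp (-(2 * ε ^ 2) / (γ ^ 2 * L ^ 4 * (R.card : ℝ) ^ 2))) ≤
      μ {ω | 0 ≤ f (fun i => if ω i then 1 else 0) - f zstar ∧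
             f (fun i => if ω i then 1 else 0) - f zstar ≤ ε} := by
  have hp (i : Fin n) := Real.toNNReal_le_one.mpr (hzstar i).2
  obtain rfl : μ = bernoulliPi _ hp := hμ
  set t := 2 * ε / (γ * L ^ 2 * R.card)
  have ht : 0 ≤ t := by positivity
  -- `c / c ≤ 1` also covers `L = 0` or `R = ∅`, where `t = 0`
  have hεt : γ / 2 * (R.card * (t * L ^ 2)) ≤ ε :=
    calc γ / 2 * (R.card * (t * L ^ 2))
        = ε * ((γ * L ^ 2 * R.card) / (γ * L ^ 2 * R.card)) := by ring
      _ ≤ ε := mul_le_of_le_one_right hε.le (div_self_le_one _)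
  have hgood : ∀ᵐ ω ∂bernoulliPi _ hp, ω ∉ {ω | ∃ i ∈ R.filter (t < zstar ·), ω i = false} →
      0 ≤ f (fun i => if ω i then 1 else 0) - f zstar ∧
        f (fun i => if ω i then 1 else 0) - f zstar ≤ ε := by
    filter_upwards [bernoulliPi_toNNReal_ae_eval_eq hzstar] with ω hdet hnotbad
    have hbin (i : Fin n) := (ite_eq_or_eq (ω i) (1 : ℝ) 0).symm
    have hoff (i) (hi : i ∉ R) := hdet i (by simpa [hR] using hi)
    have hround (i) (hi : i ∈ R) (hti : t < zstar i) : (if ω i then (1 : ℝ) else 0) = 1 := by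
      simpa using fun hf => hnotbad ⟨i, mem_filter.2 ⟨hi, hti⟩, hf⟩
    exact ⟨sub_nonneg.2 (hmin _ hbin), (ridge_sub_le_of_rounded hγ.le hzstar hbin hoff hround ht
      (hbdd _ hbin) (hubstar _) (hatt _ hbin)).trans hεt⟩
  have hbad := bernoulliPi_exists_eval_false_le _ hp (R.filter (t < zstar ·))
    (c := Real.exp (-(t ^ 2 / 2))) fun i hi => by
      rw [Real.coe_toNNReal _ (hzstar i).1]
      linarith [Real.one_sub_le_exp_neg_sq_div_two ht, (mem_filter.1 hi).2]
  have hexp : -(2 * ε ^ 2) / (γ ^ 2 * L ^ 4 * (R.card : ℝ) ^ 2) = -(t ^ 2 / 2) := by ring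
  rw [hexp, ENNReal.ofReal_sub _ (by positivity), ENNReal.ofReal_one,
    ENNReal.ofReal_mul (by positivity), ENNReal.ofReal_natCast]
  exact one_sub_le_measure_of_ae_notMem_imp
    (hbad.trans (by gcongr; exact filter_subset _ _)) hgood

/-- Theorem 3.1 (ridge case): randomized rounding of a relaxation minimizer `zstar`
gives, with probability at least `1 - |R| exp(-2ε²/(γ²L⁴|R|²))`, a binary vector `z`
with `0 ≤ f(z) - f(zstar) ≤ ε`. -/
theorem ridge_randomized_rounding (n : ℕ) (γ L : ℝ) (hγ : 0 < γ) (hL : 0 < L)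
    (h : (Fin n → ℝ) → ℝ) (f : (Fin n → ℝ) → ℝ) (αstar : (Fin n → ℝ) → (Fin n → ℝ))
    (zstar : Fin n → ℝ) (hzstar : ∀ i, 0 ≤ zstar i ∧ zstar i ≤ 1)
    (R : Finset (Fin n)) (hR : R = Finset.univ.filter fun i => 0 < zstar i ∧ zstar i < 1)
    (hRcard : 1 ≤ R.card)
    -- `f zstar` is the supremum value at `zstar` :
    (hubstar : ∀ α : Fin n → ℝ, h α - (γ / 2) * ∑ i, zstar i * (α i) ^ 2 ≤ f zstar)
    -- `zstar` is a relaxation lower bound: `f zstar ≤ f z` for every binary `z` :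
    (hmin : ∀ z : Fin n → ℝ, (∀ i, z i = 0 ∨ z i = 1) → f zstar ≤ f z)
    -- at every binary `z`, `f z` is the supremum value, attained at `αstar z` :
    (hub : ∀ z : Fin n → ℝ, (∀ i, z i = 0 ∨ z i = 1) →
      ∀ α : Fin n → ℝ, h α - (γ / 2) * ∑ i, z i * (α i) ^ 2 ≤ f z)
    (hatt : ∀ z : Fin n → ℝ, (∀ i, z i = 0 ∨ z i = 1) →
      f z = h (αstar z) - (γ / 2) * ∑ i, z i * (αstar z i) ^ 2)
    (hbdd : ∀ z : Fin n → ℝ, (∀ i, z i = 0 ∨ z i = 1) → ∀ i, |αstar z i| ≤ L)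
    -- `μ` is the product Bernoulli(zstar i) measure on `{0,1}ⁿ` :
    (μ : MeasureTheory.Measure (Fin n → Bool))
    (hμ : μ = MeasureTheory.Measure.pi fun i =>
      (PMF.bernoulli (Real.toNNReal (zstar i))
        (Real.toNNReal_le_one.mpr (hzstar i).2)).toMeasure)
    (ε : ℝ) (hε : 0 < ε) :
    ENNReal.ofReal
        (1 - R.card * Real.exp (-(2 * ε ^ 2) / (γ ^ 2 * L ^ 4 * (R.card : ℝ) ^ 2))) ≤
      μ {ω | 0 ≤ f (fun i => if ω i then 1 else 0) - f zstar ∧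
             f (fun i => if ω i then 1 else 0) - f zstar ≤ ε} :=
  ridge_randomized_rounding_general n γ L hγ h f αstar zstar hzstar R hR hubstar hmin hatt hbdd μ hμ
    ε hε
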